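/- Let b_1, ..., b_n be linearly independent vectors in R^n with Gram–Schmidt orthogonalization b_1*, ..., b_n* and Gram–Schmidt coefficients μ_{ij}, and let r ≥ 0. If v ∈ Z^n satisfies ‖Σ_{i=1}^n v_i b_i‖ ≤ r, then for every j = 1, ..., n one has | v_j + Σ_{i=j+1}^n v_i μ_{ij} | ≤ r / ‖b_j*‖. -/

import Mathlib

/-
Pairing `x = ∑ i, c i • b i` with `b j*` kills the `b i` with `i < j`, since `b j*` is orthogonal
to their span, and turns each `b i` with `i ≥ j` into `μ i j * ‖b j*‖²` (with `μ j j = 1`). So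
`⟪x, b j*⟫ = (c j + ∑ i > j, c i * μ i j) * ‖b j*‖²`, and Cauchy–Schwarz bounds this by
`‖x‖ * ‖b j*‖`.
-/

instance (n : ℕ) : WellFoundedLT (Fin n) := inferInstance

open Finset InnerProductSpace

theorem inner_gramSchmidt_self_right {𝕜 E ι : Type*} [RCLike 𝕜] [NormedAddCommGroup E]
    [InnerProductSpace 𝕜 E] [LinearOrder ι] [LocallyFiniteOrderBot ι] [WellFoundedLT ι]
    (f : ι → E) (j : ι) :
    inner 𝕜 (gramSchmidt 𝕜 f j) (f j) = (‖gramSchmidt 𝕜 f j‖ : 𝕜) ^ 2 := by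
  conv_lhs => rw [gramSchmidt_def'' 𝕜 f j]
  rw [inner_add_right, inner_self_eq_norm_sq_to_K, inner_sum, sum_eq_zero, add_zero]
  intro i hi
  rw [inner_smul_right, gramSchmidt_orthogonal 𝕜 f (mem_Iio.mp hi).ne', mul_zero]

section GramSchmidtCoeff

variable {E ι : Type*} [NormedAddCommGroup E] [InnerProductSpace ℝ E]
  [LinearOrder ι] [LocallyFiniteOrderBot ι] [WellFoundedLT ι]

noncomputable def gramSchmidtCoeff (f : ι → E) (i j : ι) : ℝ :=
  inner ℝ (f i) (gramSchmidt ℝ f j) / ‖gramSchmidt ℝ f j‖ ^ 2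

variable [Fintype ι] [LocallyFiniteOrderTop ι]

theorem inner_sum_smul_gramSchmidt (f : ι → E) (c : ι → ℝ) (j : ι) :
    inner ℝ (∑ i, c i • f i) (gramSchmidt ℝ f j)
      = c j * ‖gramSchmidt ℝ f j‖ ^ 2 + ∑ i ∈ Ioi j, c i * inner ℝ (f i) (gramSchmidt ℝ f j) := by
  have h_lt : ∀ i ∈ univ, i ∉ Ici j → c i * inner ℝ (f i) (gramSchmidt ℝ f j) = 0 := by
    intro i _ hi
    rw [real_inner_comm, gramSchmidt_inv_triangular ℝ f (not_le.mp (by simpa using hi)), mul_zero]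
  simp only [sum_inner, real_inner_smul_left]
  rw [← sum_subset (subset_univ _) h_lt, Ici_eq_cons_Ioi, sum_cons, real_inner_comm,
    inner_gramSchmidt_self_right, RCLike.ofReal_real_eq_id, id]

theorem inner_sum_smul_gramSchmidt_eq_mul_norm_sq (f : ι → E) (c : ι → ℝ) {j : ι}
    (hj : gramSchmidt ℝ f j ≠ 0) :
    inner ℝ (∑ i, c i • f i) (gramSchmidt ℝ f j)
      = (c j + ∑ i ∈ Ioi j, c i * gramSchmidtCoeff f i j) * ‖gramSchmidt ℝ f j‖ ^ 2 := by
  rw [inner_sum_smul_gramSchmidt, add_mul, sum_mul]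
  congr 1
  refine sum_congr rfl fun i _ => ?_
  rw [gramSchmidtCoeff, mul_assoc, div_mul_cancel₀ _ (by simpa using hj)]

theorem abs_add_sum_mul_gramSchmidtCoeff_le (f : ι → E) (c : ι → ℝ) {j : ι}
    (hj : gramSchmidt ℝ f j ≠ 0) :
    |c j + ∑ i ∈ Ioi j, c i * gramSchmidtCoeff f i j|
      ≤ ‖∑ i, c i • f i‖ / ‖gramSchmidt ℝ f j‖ := by
  have hpos : 0 < ‖gramSchmidt ℝ f j‖ := norm_pos_iff.mpr hj
  rw [le_div_iff₀ hpos]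
  refine le_of_mul_le_mul_right ?_ hpos
  calc _ = |inner ℝ (∑ i, c i • f i) (gramSchmidt ℝ f j)| := by
        rw [inner_sum_smul_gramSchmidt_eq_mul_norm_sq f c hj, abs_mul, abs_sq]; ring
    _ ≤ ‖∑ i, c i • f i‖ * ‖gramSchmidt ℝ f j‖ := abs_real_inner_le_norm _ _

end GramSchmidtCoeff

theorem stmt_3_general (n : ℕ) (b : Fin n → EuclideanSpace ℝ (Fin n))
    (hb : LinearIndependent ℝ b) (μ : Fin n → Fin n → ℝ)
    (hμ : ∀ i j : Fin n,
      μ i j = (inner ℝ (b i) (InnerProductSpace.gramSchmidt ℝ b j) : ℝ) / ‖InnerProductSpace.gramSchmidt ℝ b j‖ ^ 2)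
    (r : ℝ) (v : Fin n → ℤ)
    (hv : ‖∑ i : Fin n, (v i : ℝ) • b i‖ ≤ r) :
    ∀ j : Fin n,
      |(v j : ℝ) + ∑ i ∈ Finset.Ioi j, (v i : ℝ) * μ i j| ≤ r / ‖InnerProductSpace.gramSchmidt ℝ b j‖ := by
  intro j
  obtain rfl : μ = gramSchmidtCoeff b := funext₂ hμ
  exact (abs_add_sum_mul_gramSchmidtCoeff_le b (fun i => (v i : ℝ)) (gramSchmidt_ne_zero j hb)).trans
    (div_le_div_of_nonneg_right hv (norm_nonneg _))

/-- Let `b 1, ..., b n` be linearly independent vectors in `ℝ^n` with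
Gram–Schmidt orthogonalization `b* = gramSchmidt ℝ b` and Gram–Schmidt coefficients
`μ i j = ⟪b i, bⱼ*⟫ / ‖bⱼ*‖²`, and let `r ≥ 0`. If `v ∈ ℤ^n` satisfies
`‖∑ i, v i • b i‖ ≤ r`, then for every `j` one has
`|v j + ∑_{i > j} v i * μ i j| ≤ r / ‖bⱼ*‖`. -/
theorem stmt_3 (n : ℕ) (b : Fin n → EuclideanSpace ℝ (Fin n))
    (hb : LinearIndependent ℝ b) (μ : Fin n → Fin n → ℝ)
    (hμ : ∀ i j : Fin n,
      μ i j = (inner ℝ (b i) (InnerProductSpace.gramSchmidt ℝ b j) : ℝ) / ‖InnerProductSpace.gramSchmidt ℝ b j‖ ^ 2)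
    (r : ℝ) (hr : 0 ≤ r) (v : Fin n → ℤ)
    (hv : ‖∑ i : Fin n, (v i : ℝ) • b i‖ ≤ r) :
    ∀ j : Fin n,
      |(v j : ℝ) + ∑ i ∈ Finset.Ioi j, (v i : ℝ) * μ i j| ≤ r / ‖InnerProductSpace.gramSchmidt ℝ b j‖ :=
  stmt_3_general n b hb μ hμ r v hv
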